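/- Let f, g : ℋ^r → ℂ, ε∈{±1}, c∈ℂ, and suppose that: f|_k W_q = ε·g, that f|_k (p,0;0,1) + Σ_{α∈𝓕} f|_k (1,α;0,p) = c·f, and that g|_k (p,0;0,1) + Σ_{α∈𝓕} g|_k (1,α;0,p) = c·g. For each α∈𝓕^×:=𝓕∖{0}, let β∈𝓕^× be the unique element with p | αβq+1 in O_F, and set γ_{p,−α} = (p, −α; −βq, (αβq+1)/p), a matrix in SL₂(F). Then Σ_{α∈𝓕^×} ( (f|_k γ_{p,−α})|_k T^{α/p} − f|_k T^{α/p} ) = 0 as a function on ℋ^r, where T^{α/p}=(1, α/p; 0, 1). -/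

import Mathlib

set_option linter.unusedSectionVars false
set_option maxHeartbeats 1000000


open NumberField Complex
open scoped nonZeroDivisors Classical

noncomputable section

variable (F : Type*) [Field F] [NumberField F]

/-- The weight-`k` slash operator `g ↦ g|_k γ` on functions on `ℋ^r`:
`(g|_k γ)(z) = ∏_j (det γ^{(j)})^{k_j/2}(c^{(j)}z_j+d^{(j)})^{-k_j} · g(γ^{(1)}z_1,…,γ^{(r)}z_r)`. -/
def slash (r : ℕ) (σ : Fin r → (F →+* ℝ)) (k : Fin r → ℕ)
    (γ : Matrix (Fin 2) (Fin 2) F) (g : (Fin r → ℂ) → ℂ) : (Fin r → ℂ) → ℂ :=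
  fun z =>
    (∏ j, ((σ j γ.det : ℝ) : ℂ) ^ (k j / 2) *
      (((σ j (γ 1 0) : ℝ) : ℂ) * z j + ((σ j (γ 1 1) : ℝ) : ℂ)) ^ (-(k j : ℤ))) *
    g (fun j => (((σ j (γ 0 0) : ℝ) : ℂ) * z j + ((σ j (γ 0 1) : ℝ) : ℂ)) /
        (((σ j (γ 1 0) : ℝ) : ℂ) * z j + ((σ j (γ 1 1) : ℝ) : ℂ)))

lemma ps_aux_denom_ne (c d : ℝ) (hcd : ¬ (c = 0 ∧ d = 0)) (z : ℂ) (hz : 0 < z.im) :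
    (c : ℂ) * z + d ≠ 0 := by
  intro h
  have him : c * z.im = 0 := by
    have := congrArg Complex.im h
    simpa using this
  have hc : c = 0 := by
    rcases mul_eq_zero.mp him with h' | h'
    · exact h'
    · exact absurd h' hz.ne'
  have hd : d = 0 := by
    have := congrArg Complex.re h
    simpa [hc] using this
  exact hcd ⟨hc, hd⟩

lemma ps_aux_im_pos (a b c d : ℝ) (h : 0 < a * d - b * c) (z : ℂ) (hz : 0 < z.im) :
    0 < (((a : ℂ) * z + b) / ((c : ℂ) * z + d)).im := by
  have hcd : ¬ (c = 0 ∧ d = 0) := by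
    rintro ⟨rfl, rfl⟩
    simp at h
  have hD := ps_aux_denom_ne c d hcd z hz
  have hns : 0 < Complex.normSq ((c : ℂ) * z + d) := Complex.normSq_pos.mpr hD
  have him : (((a : ℂ) * z + b) / ((c : ℂ) * z + d)).im
      = (a * d - b * c) * z.im / Complex.normSq ((c : ℂ) * z + d) := by
    rw [Complex.div_im, Complex.normSq_apply]
    simp only [Complex.add_im, Complex.add_re, Complex.mul_im, Complex.mul_re,
      Complex.ofReal_re, Complex.ofReal_im]
    field_simp
    ring
  rw [him]
  positivity

def ps_mact (r : ℕ) (σ : Fin r → (F →+* ℝ)) (γ : Matrix (Fin 2) (Fin 2) F)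
    (z : Fin r → ℂ) : Fin r → ℂ :=
  fun j => (((σ j (γ 0 0) : ℝ) : ℂ) * z j + ((σ j (γ 0 1) : ℝ) : ℂ)) /
      (((σ j (γ 1 0) : ℝ) : ℂ) * z j + ((σ j (γ 1 1) : ℝ) : ℂ))

def ps_jf (r : ℕ) (σ : Fin r → (F →+* ℝ)) (k : Fin r → ℕ) (γ : Matrix (Fin 2) (Fin 2) F)
    (z : Fin r → ℂ) : ℂ :=
  ∏ j, ((σ j γ.det : ℝ) : ℂ) ^ (k j / 2) *
      (((σ j (γ 1 0) : ℝ) : ℂ) * z j + ((σ j (γ 1 1) : ℝ) : ℂ)) ^ (-(k j : ℤ))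

lemma ps_slash_eval (r : ℕ) (σ : Fin r → (F →+* ℝ)) (k : Fin r → ℕ)
    (γ : Matrix (Fin 2) (Fin 2) F) (g : (Fin r → ℂ) → ℂ) (z : Fin r → ℂ) :
    slash F r σ k γ g z = ps_jf F r σ k γ z * g (ps_mact F r σ γ z) := rfl

lemma ps_sigma_det (r : ℕ) (σ : Fin r → (F →+* ℝ)) (γ : Matrix (Fin 2) (Fin 2) F) (j : Fin r) :
    σ j γ.det = σ j (γ 0 0) * σ j (γ 1 1) - σ j (γ 0 1) * σ j (γ 1 0) := by
  rw [Matrix.det_fin_two, map_sub, map_mul, map_mul]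

lemma ps_mact_denom_ne (r : ℕ) (σ : Fin r → (F →+* ℝ)) (γ : Matrix (Fin 2) (Fin 2) F)
    (hdet : ∀ j, 0 < σ j γ.det) (z : Fin r → ℂ) (hz : ∀ j, 0 < (z j).im) (j : Fin r) :
    ((σ j (γ 1 0) : ℝ) : ℂ) * z j + ((σ j (γ 1 1) : ℝ) : ℂ) ≠ 0 := by
  apply ps_aux_denom_ne _ _ _ _ (hz j)
  rintro ⟨h1, h2⟩
  have := hdet j
  rw [ps_sigma_det] at this
  rw [h1, h2] at this
  simp at this

lemma ps_mact_mem (r : ℕ) (σ : Fin r → (F →+* ℝ)) (γ : Matrix (Fin 2) (Fin 2) F)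
    (hdet : ∀ j, 0 < σ j γ.det) (z : Fin r → ℂ) (hz : ∀ j, 0 < (z j).im) :
    ∀ j, 0 < ((ps_mact F r σ γ z) j).im := by
  intro j
  apply ps_aux_im_pos _ _ _ _ _ _ (hz j)
  have := hdet j
  rw [ps_sigma_det] at this
  linarith

lemma ps_mul_entry (A Bm : Matrix (Fin 2) (Fin 2) F) (i l : Fin 2) :
    (A * Bm) i l = A i 0 * Bm 0 l + A i 1 * Bm 1 l := by
  rw [Matrix.mul_apply, Fin.sum_univ_two]

lemma ps_slash_slash (r : ℕ) (σ : Fin r → (F →+* ℝ)) (k : Fin r → ℕ)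
    (A Bm : Matrix (Fin 2) (Fin 2) F) (f : (Fin r → ℂ) → ℂ) (z : Fin r → ℂ)
    (hD : ∀ j, ((σ j (Bm 1 0) : ℝ) : ℂ) * z j + ((σ j (Bm 1 1) : ℝ) : ℂ) ≠ 0) :
    slash F r σ k Bm (slash F r σ k A f) z = slash F r σ k (A * Bm) f z := by
  rw [ps_slash_eval, ps_slash_eval, ps_slash_eval]
  have key : ∀ j : Fin r,
      ((σ j (A 1 0) : ℝ) : ℂ) * (ps_mact F r σ Bm z j) + ((σ j (A 1 1) : ℝ) : ℂ)
        = (((σ j ((A * Bm) 1 0) : ℝ) : ℂ) * z j + ((σ j ((A * Bm) 1 1) : ℝ) : ℂ)) /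
          (((σ j (Bm 1 0) : ℝ) : ℂ) * z j + ((σ j (Bm 1 1) : ℝ) : ℂ)) := by
    intro j
    rw [ps_mul_entry, ps_mul_entry, map_add, map_add, map_mul, map_mul, map_mul, map_mul]
    simp only [ps_mact]
    push_cast
    rw [eq_div_iff (hD j), add_mul, mul_assoc, div_mul_cancel₀ _ (hD j)]
    ring
  have keyn : ∀ j : Fin r,
      ((σ j (A 0 0) : ℝ) : ℂ) * (ps_mact F r σ Bm z j) + ((σ j (A 0 1) : ℝ) : ℂ)
        = (((σ j ((A * Bm) 0 0) : ℝ) : ℂ) * z j + ((σ j ((A * Bm) 0 1) : ℝ) : ℂ)) /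
          (((σ j (Bm 1 0) : ℝ) : ℂ) * z j + ((σ j (Bm 1 1) : ℝ) : ℂ)) := by
    intro j
    rw [ps_mul_entry, ps_mul_entry, map_add, map_add, map_mul, map_mul, map_mul, map_mul]
    simp only [ps_mact]
    push_cast
    rw [eq_div_iff (hD j), add_mul, mul_assoc, div_mul_cancel₀ _ (hD j)]
    ring
  have harg : ps_mact F r σ A (ps_mact F r σ Bm z) = ps_mact F r σ (A * Bm) z := by
    funext j
    show (((σ j (A 0 0) : ℝ) : ℂ) * (ps_mact F r σ Bm z j) + ((σ j (A 0 1) : ℝ) : ℂ)) /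
        (((σ j (A 1 0) : ℝ) : ℂ) * (ps_mact F r σ Bm z j) + ((σ j (A 1 1) : ℝ) : ℂ))
      = ps_mact F r σ (A * Bm) z j
    rw [key, keyn]
    show _ = (((σ j ((A * Bm) 0 0) : ℝ) : ℂ) * z j + ((σ j ((A * Bm) 0 1) : ℝ) : ℂ)) /
        (((σ j ((A * Bm) 1 0) : ℝ) : ℂ) * z j + ((σ j ((A * Bm) 1 1) : ℝ) : ℂ))
    rcases eq_or_ne (((σ j ((A * Bm) 1 0) : ℝ) : ℂ) * z j + ((σ j ((A * Bm) 1 1) : ℝ) : ℂ)) 0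
        with hE | hE
    · simp [hE]
    · rw [div_div_div_cancel_right₀ (hD j)]
  rw [harg, ← mul_assoc]
  congr 1
  rw [ps_jf, ps_jf, ps_jf, ← Finset.prod_mul_distrib]
  apply Finset.prod_congr rfl
  intro j _
  have hdet : ((σ j (A * Bm).det : ℝ) : ℂ) = ((σ j A.det : ℝ) : ℂ) * ((σ j Bm.det : ℝ) : ℂ) := by
    rw [Matrix.det_mul, map_mul]
    push_cast
    ring
  rw [key, hdet, mul_pow, div_zpow]
  have h2 : (((σ j (Bm 1 0) : ℝ) : ℂ) * z j + ((σ j (Bm 1 1) : ℝ) : ℂ)) ^ (-(k j : ℤ)) ≠ 0 :=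
    zpow_ne_zero _ (hD j)
  field_simp [h2]

lemma ps_slash_one (r : ℕ) (σ : Fin r → (F →+* ℝ)) (k : Fin r → ℕ)
    (f : (Fin r → ℂ) → ℂ) (z : Fin r → ℂ) :
    slash F r σ k 1 f z = f z := by
  simp [slash, Matrix.one_apply]

lemma ps_slash_smul (r : ℕ) (σ : Fin r → (F →+* ℝ)) (k : Fin r → ℕ)
    (hk : ∀ j, Even (k j)) (lam : F) (hlam : lam ≠ 0)
    (A : Matrix (Fin 2) (Fin 2) F) (f : (Fin r → ℂ) → ℂ) (z : Fin r → ℂ) :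
    slash F r σ k (lam • A) f z = slash F r σ k A f z := by
  have hl : ∀ j : Fin r, ((σ j lam : ℝ) : ℂ) ≠ 0 := by
    intro j
    simp only [ne_eq, Complex.ofReal_eq_zero]
    intro h
    exact hlam ((σ j).injective (by rw [h, map_zero]))
  have hent : ∀ i l, (lam • A) i l = lam * A i l := by
    intro i l; simp [Matrix.smul_apply]
  have harg : (fun j => (((σ j ((lam • A) 0 0) : ℝ) : ℂ) * z j + ((σ j ((lam • A) 0 1) : ℝ) : ℂ)) /
        (((σ j ((lam • A) 1 0) : ℝ) : ℂ) * z j + ((σ j ((lam • A) 1 1) : ℝ) : ℂ)))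
      = (fun j => (((σ j (A 0 0) : ℝ) : ℂ) * z j + ((σ j (A 0 1) : ℝ) : ℂ)) /
        (((σ j (A 1 0) : ℝ) : ℂ) * z j + ((σ j (A 1 1) : ℝ) : ℂ))) := by
    funext j
    rw [hent, hent, hent, hent, map_mul, map_mul, map_mul, map_mul]
    push_cast
    rw [show ((σ j lam : ℝ) : ℂ) * ((σ j (A 0 0) : ℝ) : ℂ) * z j +
          ((σ j lam : ℝ) : ℂ) * ((σ j (A 0 1) : ℝ) : ℂ)
        = ((σ j lam : ℝ) : ℂ) * (((σ j (A 0 0) : ℝ) : ℂ) * z j + ((σ j (A 0 1) : ℝ) : ℂ)) by ring,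
      show ((σ j lam : ℝ) : ℂ) * ((σ j (A 1 0) : ℝ) : ℂ) * z j +
          ((σ j lam : ℝ) : ℂ) * ((σ j (A 1 1) : ℝ) : ℂ)
        = ((σ j lam : ℝ) : ℂ) * (((σ j (A 1 0) : ℝ) : ℂ) * z j + ((σ j (A 1 1) : ℝ) : ℂ)) by ring]
    exact mul_div_mul_left _ _ (hl j)
  rw [slash, slash]
  rw [harg]
  congr 1
  apply Finset.prod_congr rfl
  intro j _
  have hdet : (lam • A).det = lam ^ 2 * A.det := by
    rw [Matrix.det_smul]
    norm_num
  rw [hdet, hent, hent, map_mul, map_mul, map_mul, map_pow]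
  push_cast
  rw [mul_pow, ← pow_mul, mul_comm 2 (k j / 2), Nat.div_mul_cancel ((hk j).two_dvd)]
  rw [show ((σ j lam : ℝ) : ℂ) * ((σ j (A 1 0) : ℝ) : ℂ) * z j +
        ((σ j lam : ℝ) : ℂ) * ((σ j (A 1 1) : ℝ) : ℂ)
      = ((σ j lam : ℝ) : ℂ) * (((σ j (A 1 0) : ℝ) : ℂ) * z j + ((σ j (A 1 1) : ℝ) : ℂ)) by ring]
  rw [mul_zpow]
  have hcanc : ((σ j lam : ℝ) : ℂ) ^ (k j) * ((σ j lam : ℝ) : ℂ) ^ (-(k j : ℤ)) = 1 := by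
    rw [← zpow_natCast (((σ j lam : ℝ) : ℂ)) (k j), ← zpow_add₀ (hl j)]
    simp
  linear_combination (((σ j A.det : ℝ) : ℂ) ^ (k j / 2) *
    ((((σ j (A 1 0) : ℝ) : ℂ) * z j + ((σ j (A 1 1) : ℝ) : ℂ)) ^ (-(k j : ℤ)))) * hcanc

/-- **The prime sum relation (Lemma `primesum`).**
If `f|_k W_q = ε g` and `f`, `g` are eigenfunctions of the renormalized Hecke operator
`𝒯_{p,𝓕}` with the same eigenvalue `c`, then
`Σ_{α∈𝓕^×} ( (f|_k γ_{p,-α})|_k T^{α/p} − f|_k T^{α/p} ) = 0`, where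
`γ_{p,-α} = (p, -α; -βq, (αβq+1)/p)` and `β ∈ 𝓕^×` is the unique element with
`p ∣ αβq+1`. -/
theorem stmt_12 (F : Type*) [Field F] [NumberField F]
    (r : ℕ) (hr : 1 < r) (hrank : Module.finrank ℚ F = r)
    (σ : Fin r → (F →+* ℝ)) (hσ : Function.Injective σ)
    (k : Fin r → ℕ) (hk : ∀ j, Even (k j) ∧ 0 < k j)
    (q : 𝓞 F) (hqpos : ∀ j, 0 < σ j (algebraMap (𝓞 F) F q))
    (p : 𝓞 F) (hppos : ∀ j, 0 < σ j (algebraMap (𝓞 F) F p))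
    (hpprime : (Ideal.span {p}).IsPrime) (hp0 : Ideal.span {p} ≠ (⊥ : Ideal (𝓞 F)))
    (hpq : ¬ (p ∣ q))
    (Fs : Finset (𝓞 F)) (h0Fs : (0 : 𝓞 F) ∈ Fs)
    (hFs : ∀ x : 𝓞 F, ∃! α : 𝓞 F, α ∈ Fs ∧ x - α ∈ Ideal.span {p})
    (B : 𝓞 F → 𝓞 F)
    (hB : ∀ α ∈ Fs.erase 0, B α ∈ Fs.erase 0 ∧ p ∣ (α * B α * q + 1))
    (f g : (Fin r → ℂ) → ℂ) (eps : ℂ) (heps : eps = 1 ∨ eps = -1) (c : ℂ)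
    (hfW : ∀ z : Fin r → ℂ, (∀ j, 0 < (z j).im) →
      slash F r σ k !![0, -1; algebraMap (𝓞 F) F q, 0] f z = eps * g z)
    (hf : ∀ z : Fin r → ℂ, (∀ j, 0 < (z j).im) →
      slash F r σ k !![algebraMap (𝓞 F) F p, 0; 0, 1] f z +
        ∑ α ∈ Fs, slash F r σ k
          !![1, algebraMap (𝓞 F) F α; 0, algebraMap (𝓞 F) F p] f z = c * f z)
    (hg : ∀ z : Fin r → ℂ, (∀ j, 0 < (z j).im) →
      slash F r σ k !![algebraMap (𝓞 F) F p, 0; 0, 1] g z +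
        ∑ α ∈ Fs, slash F r σ k
          !![1, algebraMap (𝓞 F) F α; 0, algebraMap (𝓞 F) F p] g z = c * g z) :
    ∀ z : Fin r → ℂ, (∀ j, 0 < (z j).im) →
      ∑ α ∈ Fs.erase 0,
        (slash F r σ k
            !![1, algebraMap (𝓞 F) F α / algebraMap (𝓞 F) F p; 0, 1]
            (slash F r σ k
              !![algebraMap (𝓞 F) F p, -(algebraMap (𝓞 F) F α);
                 -(algebraMap (𝓞 F) F (B α)) * algebraMap (𝓞 F) F q,
                 (algebraMap (𝓞 F) F α * algebraMap (𝓞 F) F (B α) *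
                     algebraMap (𝓞 F) F q + 1) / algebraMap (𝓞 F) F p] f) z -
          slash F r σ k
            !![1, algebraMap (𝓞 F) F α / algebraMap (𝓞 F) F p; 0, 1] f z) = 0 := by
  intro z hz
  have hkeven : ∀ j, Even (k j) := fun j => (hk j).1
  set P := algebraMap (𝓞 F) F p with hPdef
  set Q := algebraMap (𝓞 F) F q with hQdef
  have hj0 : (0 : ℕ) < r := by omega
  have hσP : ∀ j, 0 < σ j P := hppos
  have hσQ : ∀ j, 0 < σ j Q := hqpos
  have hP0 : P ≠ 0 := by
    intro h
    have := hσP ⟨0, hj0⟩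
    rw [h, map_zero] at this
    exact lt_irrefl 0 this
  have hQ0 : Q ≠ 0 := by
    intro h
    have := hσQ ⟨0, hj0⟩
    rw [h, map_zero] at this
    exact lt_irrefl 0 this
  have hnQ0 : (-Q) ≠ 0 := neg_ne_zero.mpr hQ0
  -- number theory
  have hp_ne : p ≠ 0 := by
    intro h
    exact hp0 (by rw [h]; exact Ideal.span_singleton_eq_bot.mpr rfl)
  have hprime : Prime p := (Ideal.span_singleton_prime hp_ne).mp hpprime
  have hcong : ∀ x ∈ Fs, ∀ y ∈ Fs, p ∣ x - y → x = y := by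
    intro x hx y hy hxy
    obtain ⟨a, ha1, ha2⟩ := hFs x
    have h1 : x = a := ha2 x ⟨hx, by rw [sub_self]; exact Ideal.zero_mem _⟩
    have h2 : y = a := ha2 y ⟨hy, Ideal.mem_span_singleton.mpr hxy⟩
    rw [h1, h2]
  have hpnotdvd : ∀ β ∈ Fs.erase 0, ¬ p ∣ β := by
    intro β hβ hdvd
    have hβ0 : β = 0 := hcong β (Finset.mem_of_mem_erase hβ) 0 h0Fs (by simpa using hdvd)
    exact (Finset.mem_erase.mp hβ).1 hβ0
  have hBinj : ∀ a₁ (ha₁ : a₁ ∈ Fs.erase 0), ∀ a₂ (ha₂ : a₂ ∈ Fs.erase 0),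
      B a₁ = B a₂ → a₁ = a₂ := by
    intro a₁ ha₁ a₂ ha₂ heq
    have d₁ := (hB a₁ ha₁).2
    have d₂ := (hB a₂ ha₂).2
    rw [heq] at d₁
    have hd : p ∣ (a₁ - a₂) * (B a₂ * q) := by
      have h3 : (a₁ - a₂) * (B a₂ * q) = (a₁ * B a₂ * q + 1) - (a₂ * B a₂ * q + 1) := by ring
      rw [h3]
      exact dvd_sub d₁ d₂
    rcases hprime.dvd_mul.mp hd with h | h
    · exact hcong a₁ (Finset.mem_of_mem_erase ha₁) a₂ (Finset.mem_of_mem_erase ha₂) h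
    · rcases hprime.dvd_mul.mp h with h' | h'
      · exact absurd h' (hpnotdvd (B a₂) (hB a₂ ha₂).1)
      · exact absurd h' hpq
  have hBsurj : ∀ b ∈ Fs.erase 0, ∃ a, ∃ ha : a ∈ Fs.erase 0, B a = b := by
    have himg : (Fs.erase 0).image B = Fs.erase 0 := by
      apply Finset.eq_of_subset_of_card_le
      · intro x hx
        obtain ⟨a, ha, rfl⟩ := Finset.mem_image.mp hx
        exact (hB a ha).1
      · rw [Finset.card_image_of_injOn (fun a ha b hb => hBinj a ha b hb)]
    intro b hb
    rw [← himg] at hb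
    obtain ⟨a, ha, rfl⟩ := Finset.mem_image.mp hb
    exact ⟨a, ha, rfl⟩
  -- determinant positivity facts
  have hdetW : ∀ j, 0 < σ j (!![0, 1/Q; -1, 0] : Matrix (Fin 2) (Fin 2) F).det := by
    intro j
    have h : (!![0, 1/Q; -1, 0] : Matrix (Fin 2) (Fin 2) F).det = 1/Q := by
      rw [Matrix.det_fin_two_of]; ring
    rw [h, map_div₀, map_one]
    exact div_pos one_pos (hσQ j)
  have hdetK : ∀ j, 0 < σ j (!![0, -(1/P); Q, 0] : Matrix (Fin 2) (Fin 2) F).det := by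
    intro j
    have h : (!![0, -(1/P); Q, 0] : Matrix (Fin 2) (Fin 2) F).det = Q/P := by
      rw [Matrix.det_fin_two_of]; ring
    rw [h, map_div₀]
    exact div_pos (hσQ j) (hσP j)
  have hdetE : ∀ j, 0 < σ j (!![(1:F), 0; 0, 1/P] : Matrix (Fin 2) (Fin 2) F).det := by
    intro j
    have h : (!![(1:F), 0; 0, 1/P] : Matrix (Fin 2) (Fin 2) F).det = 1/P := by
      rw [Matrix.det_fin_two_of]; ring
    rw [h, map_div₀, map_one]
    exact div_pos one_pos (hσP j)
  have hdetDp : ∀ j, 0 < σ j (!![P, 0; 0, (1:F)] : Matrix (Fin 2) (Fin 2) F).det := by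
    intro j
    have h : (!![P, 0; 0, (1:F)] : Matrix (Fin 2) (Fin 2) F).det = P := by
      rw [Matrix.det_fin_two_of]; ring
    rw [h]
    exact hσP j
  have hdetU0 : ∀ j, 0 < σ j (!![(1:F), 0; 0, P] : Matrix (Fin 2) (Fin 2) F).det := by
    intro j
    have h : (!![(1:F), 0; 0, P] : Matrix (Fin 2) (Fin 2) F).det = P := by
      rw [Matrix.det_fin_two_of]; ring
    rw [h]
    exact hσP j
  -- claim0 : f = eps * g |_k W' on the product upper half space
  have claim0 : ∀ w : Fin r → ℂ, (∀ j, 0 < (w j).im) →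
      f w = eps * slash F r σ k !![0, 1/Q; -1, 0] g w := by
    intro w hw
    have hDW := ps_mact_denom_ne F r σ !![0, 1/Q; -1, 0] hdetW w hw
    have h2 : (!![0, -1; Q, 0] * !![0, 1/Q; -1, 0] : Matrix (Fin 2) (Fin 2) F) = 1 := by
      ext i l
      fin_cases i <;> fin_cases l <;>
        (simp only [Matrix.mul_apply, Fin.sum_univ_two, Matrix.smul_apply, smul_eq_mul,
          Matrix.cons_val', Matrix.cons_val_zero, Matrix.cons_val_one, Matrix.head_cons,
          Matrix.head_fin_const, Matrix.empty_val', Matrix.cons_val_fin_one, Matrix.of_apply, Fin.zero_eta, Fin.mk_one, Matrix.one_fin_two,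
          Matrix.one_apply_eq, Matrix.one_apply_ne (by decide : (0:Fin 2) ≠ 1),
          Matrix.one_apply_ne (by decide : (1:Fin 2) ≠ 0)] <;>
          (try field_simp) <;> (try ring))
    have h1 := ps_slash_slash F r σ k !![0, -1; Q, 0] !![0, 1/Q; -1, 0] f w hDW
    rw [h2, ps_slash_one] at h1
    rw [← h1, ps_slash_eval F r σ k !![0, 1/Q; -1, 0] (slash F r σ k !![0, -1; Q, 0] f) w,
      hfW (ps_mact F r σ !![0, 1/Q; -1, 0] w) (ps_mact_mem F r σ !![0, 1/Q; -1, 0] hdetW w hw),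
      ps_slash_eval F r σ k !![0, 1/Q; -1, 0] g w]
    ring
  -- generic conversion from f to g
  have hconv : ∀ (X : Matrix (Fin 2) (Fin 2) F), (∀ j, 0 < σ j X.det) →
      ∀ w : Fin r → ℂ, (∀ j, 0 < (w j).im) →
      slash F r σ k X f w = eps * slash F r σ k (!![0, 1/Q; -1, 0] * X) g w := by
    intro X hX w hw
    have hDX := ps_mact_denom_ne F r σ X hX w hw
    rw [← ps_slash_slash F r σ k !![0, 1/Q; -1, 0] X g w hDX]
    rw [ps_slash_eval F r σ k X f w,
      claim0 (ps_mact F r σ X w) (ps_mact_mem F r σ X hX w hw),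
      ps_slash_eval F r σ k X (slash F r σ k !![0, 1/Q; -1, 0] g) w]
    ring
  have hDK := ps_mact_denom_ne F r σ !![0, -(1/P); Q, 0] hdetK z hz
  have hDE := ps_mact_denom_ne F r σ !![(1:F), 0; 0, 1/P] hdetE z hz
  -- claim 1 : the left summand
  have claim1 : ∀ α ∈ Fs.erase 0,
      slash F r σ k !![1, algebraMap (𝓞 F) F α / P; 0, 1] (slash F r σ k !![P, -(algebraMap (𝓞 F) F α); -(algebraMap (𝓞 F) F (B α)) * Q, (algebraMap (𝓞 F) F α * algebraMap (𝓞 F) F (B α) * Q + 1) / P] f) z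
        = eps * slash F r σ k !![0, -(1/P); Q, 0] (slash F r σ k !![1, algebraMap (𝓞 F) F (B α); 0, P] g) z := by
    intro α hα
    have hdetT : ∀ j, 0 < σ j (!![1, algebraMap (𝓞 F) F α / P; 0, 1] : Matrix (Fin 2) (Fin 2) F).det := by
      intro j
      have h : (!![1, algebraMap (𝓞 F) F α / P; 0, 1] : Matrix (Fin 2) (Fin 2) F).det = 1 := by
        rw [Matrix.det_fin_two_of]; ring
      rw [h, map_one]
      exact one_pos
    have hDT := ps_mact_denom_ne F r σ !![1, algebraMap (𝓞 F) F α / P; 0, 1] hdetT z hz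
    rw [ps_slash_slash F r σ k !![P, -(algebraMap (𝓞 F) F α); -(algebraMap (𝓞 F) F (B α)) * Q, (algebraMap (𝓞 F) F α * algebraMap (𝓞 F) F (B α) * Q + 1) / P] !![1, algebraMap (𝓞 F) F α / P; 0, 1] f z hDT]
    have hdetγT : ∀ j, 0 < σ j ((!![P, -(algebraMap (𝓞 F) F α); -(algebraMap (𝓞 F) F (B α)) * Q, (algebraMap (𝓞 F) F α * algebraMap (𝓞 F) F (B α) * Q + 1) / P] : Matrix (Fin 2) (Fin 2) F) * !![1, algebraMap (𝓞 F) F α / P; 0, 1]).det := by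
      intro j
      have h : ((!![P, -(algebraMap (𝓞 F) F α); -(algebraMap (𝓞 F) F (B α)) * Q, (algebraMap (𝓞 F) F α * algebraMap (𝓞 F) F (B α) * Q + 1) / P] : Matrix (Fin 2) (Fin 2) F) * !![1, algebraMap (𝓞 F) F α / P; 0, 1]).det = 1 := by
        rw [Matrix.det_mul, Matrix.det_fin_two_of, Matrix.det_fin_two_of]
        field_simp
        ring
      rw [h, map_one]
      exact one_pos
    rw [hconv ((!![P, -(algebraMap (𝓞 F) F α); -(algebraMap (𝓞 F) F (B α)) * Q, (algebraMap (𝓞 F) F α * algebraMap (𝓞 F) F (B α) * Q + 1) / P] : Matrix (Fin 2) (Fin 2) F) * !![1, algebraMap (𝓞 F) F α / P; 0, 1]) hdetγT z hz]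
    rw [ps_slash_slash F r σ k !![1, algebraMap (𝓞 F) F (B α); 0, P] !![0, -(1/P); Q, 0] g z hDK]
    have hmat : (!![1, algebraMap (𝓞 F) F (B α); 0, P] : Matrix (Fin 2) (Fin 2) F) * !![0, -(1/P); Q, 0]
        = (-Q) • ((!![0, 1/Q; -1, 0] : Matrix (Fin 2) (Fin 2) F) * ((!![P, -(algebraMap (𝓞 F) F α); -(algebraMap (𝓞 F) F (B α)) * Q, (algebraMap (𝓞 F) F α * algebraMap (𝓞 F) F (B α) * Q + 1) / P] : Matrix (Fin 2) (Fin 2) F) * !![1, algebraMap (𝓞 F) F α / P; 0, 1])) := by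
      ext i l
      fin_cases i <;> fin_cases l <;>
        (simp only [Matrix.mul_apply, Fin.sum_univ_two, Matrix.smul_apply, smul_eq_mul,
          Matrix.cons_val', Matrix.cons_val_zero, Matrix.cons_val_one, Matrix.head_cons,
          Matrix.head_fin_const, Matrix.empty_val', Matrix.cons_val_fin_one, Matrix.of_apply, Fin.zero_eta, Fin.mk_one, Matrix.one_fin_two,
          Matrix.one_apply_eq, Matrix.one_apply_ne (by decide : (0:Fin 2) ≠ 1),
          Matrix.one_apply_ne (by decide : (1:Fin 2) ≠ 0)] <;>
          (try field_simp) <;> (try ring))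
    rw [hmat, ps_slash_smul F r σ k hkeven (-Q) hnQ0]
  -- claim 2 : the right summand
  have claim2 : ∀ α ∈ Fs.erase 0,
      slash F r σ k !![1, algebraMap (𝓞 F) F α / P; 0, 1] f z = slash F r σ k !![(1:F), 0; 0, 1/P] (slash F r σ k !![1, algebraMap (𝓞 F) F α; 0, P] f) z := by
    intro α hα
    have hmat : (!![1, algebraMap (𝓞 F) F α / P; 0, 1] : Matrix (Fin 2) (Fin 2) F) = !![1, algebraMap (𝓞 F) F α; 0, P] * !![(1:F), 0; 0, 1/P] := by
      ext i l
      fin_cases i <;> fin_cases l <;>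
        (simp only [Matrix.mul_apply, Fin.sum_univ_two, Matrix.smul_apply, smul_eq_mul,
          Matrix.cons_val', Matrix.cons_val_zero, Matrix.cons_val_one, Matrix.head_cons,
          Matrix.head_fin_const, Matrix.empty_val', Matrix.cons_val_fin_one, Matrix.of_apply, Fin.zero_eta, Fin.mk_one, Matrix.one_fin_two,
          Matrix.one_apply_eq, Matrix.one_apply_ne (by decide : (0:Fin 2) ≠ 1),
          Matrix.one_apply_ne (by decide : (1:Fin 2) ≠ 0)] <;>
          (try field_simp) <;> (try ring))
    rw [hmat]
    exact (ps_slash_slash F r σ k !![1, algebraMap (𝓞 F) F α; 0, P] !![(1:F), 0; 0, 1/P] f z hDE).symm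
  -- reindexing by the bijection B
  have hreindex : ∑ α ∈ Fs.erase 0, slash F r σ k !![0, -(1/P); Q, 0] (slash F r σ k !![1, algebraMap (𝓞 F) F (B α); 0, P] g) z
      = ∑ β ∈ Fs.erase 0, slash F r σ k !![0, -(1/P); Q, 0] (slash F r σ k !![1, algebraMap (𝓞 F) F β; 0, P] g) z :=
    Finset.sum_bij (fun α _ => B α) (fun a ha => (hB a ha).1) hBinj hBsurj (fun a ha => rfl)
  -- evaluating the g-sum via the Hecke relation
  have hKsum : ∑ β ∈ Fs.erase 0, slash F r σ k !![0, -(1/P); Q, 0] (slash F r σ k !![1, algebraMap (𝓞 F) F β; 0, P] g) z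
      = c * slash F r σ k !![0, -(1/P); Q, 0] g z - slash F r σ k !![0, -(1/P); Q, 0] (slash F r σ k !![P, 0; 0, (1:F)] g) z
        - slash F r σ k !![0, -(1/P); Q, 0] (slash F r σ k !![(1:F), 0; 0, P] g) z := by
    have hgw := hg (ps_mact F r σ !![0, -(1/P); Q, 0] z) (ps_mact_mem F r σ !![0, -(1/P); Q, 0] hdetK z hz)
    rw [Finset.sum_erase_eq_sub h0Fs]
    simp only [ps_slash_eval, map_zero] at hgw ⊢
    rw [← Finset.mul_sum]
    linear_combination (ps_jf F r σ k !![0, -(1/P); Q, 0] z) * hgw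
  -- evaluating the f-sum via the Hecke relation
  have hEsum : ∑ α ∈ Fs.erase 0, slash F r σ k !![(1:F), 0; 0, 1/P] (slash F r σ k !![1, algebraMap (𝓞 F) F α; 0, P] f) z
      = c * slash F r σ k !![(1:F), 0; 0, 1/P] f z - slash F r σ k !![(1:F), 0; 0, 1/P] (slash F r σ k !![P, 0; 0, (1:F)] f) z
        - slash F r σ k !![(1:F), 0; 0, 1/P] (slash F r σ k !![(1:F), 0; 0, P] f) z := by
    have hfw := hf (ps_mact F r σ !![(1:F), 0; 0, 1/P] z) (ps_mact_mem F r σ !![(1:F), 0; 0, 1/P] hdetE z hz)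
    rw [Finset.sum_erase_eq_sub h0Fs]
    simp only [ps_slash_eval, map_zero] at hfw ⊢
    rw [← Finset.mul_sum]
    linear_combination (ps_jf F r σ k !![(1:F), 0; 0, 1/P] z) * hfw
  -- the three conversion identities
  have hconvE : slash F r σ k !![(1:F), 0; 0, 1/P] f z = eps * slash F r σ k !![0, -(1/P); Q, 0] g z := by
    rw [hconv !![(1:F), 0; 0, 1/P] hdetE z hz]
    have hmat : (!![0, -(1/P); Q, 0] : Matrix (Fin 2) (Fin 2) F) = (-Q) • ((!![0, 1/Q; -1, 0] : Matrix (Fin 2) (Fin 2) F) * !![(1:F), 0; 0, 1/P]) := by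
      ext i l
      fin_cases i <;> fin_cases l <;>
        (simp only [Matrix.mul_apply, Fin.sum_univ_two, Matrix.smul_apply, smul_eq_mul,
          Matrix.cons_val', Matrix.cons_val_zero, Matrix.cons_val_one, Matrix.head_cons,
          Matrix.head_fin_const, Matrix.empty_val', Matrix.cons_val_fin_one, Matrix.of_apply, Fin.zero_eta, Fin.mk_one, Matrix.one_fin_two,
          Matrix.one_apply_eq, Matrix.one_apply_ne (by decide : (0:Fin 2) ≠ 1),
          Matrix.one_apply_ne (by decide : (1:Fin 2) ≠ 0)] <;>
          (try field_simp) <;> (try ring))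
    rw [hmat, ps_slash_smul F r σ k hkeven (-Q) hnQ0]
  have hconvDp : slash F r σ k !![(1:F), 0; 0, 1/P] (slash F r σ k !![P, 0; 0, (1:F)] f) z
      = eps * slash F r σ k !![0, -(1/P); Q, 0] (slash F r σ k !![(1:F), 0; 0, P] g) z := by
    rw [ps_slash_slash F r σ k !![P, 0; 0, (1:F)] !![(1:F), 0; 0, 1/P] f z hDE,
      ps_slash_slash F r σ k !![(1:F), 0; 0, P] !![0, -(1/P); Q, 0] g z hDK]
    have hdetDpE : ∀ j, 0 < σ j ((!![P, 0; 0, (1:F)] : Matrix (Fin 2) (Fin 2) F) * !![(1:F), 0; 0, 1/P]).det := by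
      intro j
      rw [Matrix.det_mul, map_mul]
      exact mul_pos (hdetDp j) (hdetE j)
    rw [hconv ((!![P, 0; 0, (1:F)] : Matrix (Fin 2) (Fin 2) F) * !![(1:F), 0; 0, 1/P]) hdetDpE z hz]
    have hmat : (!![(1:F), 0; 0, P] : Matrix (Fin 2) (Fin 2) F) * !![0, -(1/P); Q, 0]
        = (-Q) • ((!![0, 1/Q; -1, 0] : Matrix (Fin 2) (Fin 2) F) * ((!![P, 0; 0, (1:F)] : Matrix (Fin 2) (Fin 2) F) * !![(1:F), 0; 0, 1/P])) := by
      ext i l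
      fin_cases i <;> fin_cases l <;>
        (simp only [Matrix.mul_apply, Fin.sum_univ_two, Matrix.smul_apply, smul_eq_mul,
          Matrix.cons_val', Matrix.cons_val_zero, Matrix.cons_val_one, Matrix.head_cons,
          Matrix.head_fin_const, Matrix.empty_val', Matrix.cons_val_fin_one, Matrix.of_apply, Fin.zero_eta, Fin.mk_one, Matrix.one_fin_two,
          Matrix.one_apply_eq, Matrix.one_apply_ne (by decide : (0:Fin 2) ≠ 1),
          Matrix.one_apply_ne (by decide : (1:Fin 2) ≠ 0)] <;>
          (try field_simp) <;> (try ring))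
    rw [hmat, ps_slash_smul F r σ k hkeven (-Q) hnQ0]
  have hconvU0 : slash F r σ k !![(1:F), 0; 0, 1/P] (slash F r σ k !![(1:F), 0; 0, P] f) z
      = eps * slash F r σ k !![0, -(1/P); Q, 0] (slash F r σ k !![P, 0; 0, (1:F)] g) z := by
    rw [ps_slash_slash F r σ k !![(1:F), 0; 0, P] !![(1:F), 0; 0, 1/P] f z hDE,
      ps_slash_slash F r σ k !![P, 0; 0, (1:F)] !![0, -(1/P); Q, 0] g z hDK]
    have hmat1 : (!![(1:F), 0; 0, P] : Matrix (Fin 2) (Fin 2) F) * !![(1:F), 0; 0, 1/P] = 1 := by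
      ext i l
      fin_cases i <;> fin_cases l <;>
        (simp only [Matrix.mul_apply, Fin.sum_univ_two, Matrix.smul_apply, smul_eq_mul,
          Matrix.cons_val', Matrix.cons_val_zero, Matrix.cons_val_one, Matrix.head_cons,
          Matrix.head_fin_const, Matrix.empty_val', Matrix.cons_val_fin_one, Matrix.of_apply, Fin.zero_eta, Fin.mk_one, Matrix.one_fin_two,
          Matrix.one_apply_eq, Matrix.one_apply_ne (by decide : (0:Fin 2) ≠ 1),
          Matrix.one_apply_ne (by decide : (1:Fin 2) ≠ 0)] <;>
          (try field_simp) <;> (try ring))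
    rw [hmat1, ps_slash_one, claim0 z hz]
    have hmat2 : (!![P, 0; 0, (1:F)] : Matrix (Fin 2) (Fin 2) F) * !![0, -(1/P); Q, 0]
        = (-Q) • (!![0, 1/Q; -1, 0] : Matrix (Fin 2) (Fin 2) F) := by
      ext i l
      fin_cases i <;> fin_cases l <;>
        (simp only [Matrix.mul_apply, Fin.sum_univ_two, Matrix.smul_apply, smul_eq_mul,
          Matrix.cons_val', Matrix.cons_val_zero, Matrix.cons_val_one, Matrix.head_cons,
          Matrix.head_fin_const, Matrix.empty_val', Matrix.cons_val_fin_one, Matrix.of_apply, Fin.zero_eta, Fin.mk_one, Matrix.one_fin_two,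
          Matrix.one_apply_eq, Matrix.one_apply_ne (by decide : (0:Fin 2) ≠ 1),
          Matrix.one_apply_ne (by decide : (1:Fin 2) ≠ 0)] <;>
          (try field_simp) <;> (try ring))
    rw [hmat2, ps_slash_smul F r σ k hkeven (-Q) hnQ0]
  -- final assembly
  rw [Finset.sum_sub_distrib, sub_eq_zero]
  rw [Finset.sum_congr rfl claim1, Finset.sum_congr rfl claim2, ← Finset.mul_sum,
    hreindex, hKsum, hEsum, hconvE, hconvDp, hconvU0]
  ring
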